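/- arXiv:2603.00304 — 8 statements merged into one kernel-verified Lean document; each statement's English description precedes it below -/
import Mathlib

section
/- For the path graph P_n on n ≥ 1 vertices, the burning number equals ⌈√n⌉. -/
noncomputable def burningNumber {V : Type*} (G : SimpleGraph V) : ℕ :=
  sInf {k | ∃ v : Fin k → V, ∀ u : V, ∃ i : Fin k, G.dist (v i) u ≤ k - 1 - i.val}

/-!
A vertex burnt in round `i` of `k` spreads fire to the ball of radius `k - 1 - i` around it,
which in `P_n` has at most `2(k - 1 - i) + 1` vertices; summing the odd numbers gives
`n ≤ k²`. Conversely, when `n ≤ k²` the balls of radius `r < k` centred at `r² + r` (clamped to the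
last vertex) tile `[0, k²)`, the one of radius `r` covering exactly `[r², (r + 1)²)`.
-/

open Finset

theorem Finset.sum_range_two_mul_add_one (k : ℕ) : ∑ r ∈ range k, (2 * r + 1) = k ^ 2 := by
  induction k with
  | zero => simp
  | succ k ih => rw [sum_range_succ, ih]; ring

namespace SimpleGraph

variable {V : Type*}

def IsBurningSequence (G : SimpleGraph V) {k : ℕ} (v : Fin k → V) : Prop :=
  ∀ u : V, ∃ i : Fin k, G.dist (v i) u ≤ k - 1 - i.val

theorem burningNumber_eq_sInf (G : SimpleGraph V) :
    burningNumber G = sInf {k | ∃ v : Fin k → V, G.IsBurningSequence v} :=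
  rfl

theorem IsBurningSequence.card_le_sum [Fintype V] {G : SimpleGraph V} {k : ℕ} {v : Fin k → V}
    (hv : G.IsBurningSequence v) :
    Fintype.card V ≤ ∑ i : Fin k, #{u | G.dist (v i) u ≤ k - 1 - i.val} := by
  classical
  calc Fintype.card V = #(univ : Finset V) := card_univ.symm
    _ ≤ #(univ.biUnion fun i : Fin k => {u | G.dist (v i) u ≤ k - 1 - i.val}) :=
      card_le_card fun u _ => by simpa using hv u
    _ ≤ _ := card_biUnion_le

variable {n : ℕ}

theorem pathGraph_exists_walk_length_eq {i j : Fin n} (hij : i ≤ j) :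
    ∃ w : (pathGraph n).Walk i j, w.length = j - i := by
  obtain ⟨d, hd⟩ := Nat.exists_eq_add_of_le (Fin.le_def.mp hij)
  induction d generalizing i with
  | zero =>
    obtain rfl : i = j := Fin.ext (by omega)
    exact ⟨.nil, by simp⟩
  | succ d ih =>
    let i' : Fin n := ⟨i + 1, by omega⟩
    have hadj : (pathGraph n).Adj i i' := pathGraph_adj.mpr (.inl rfl)
    obtain ⟨w, hw⟩ := ih (i := i') (Fin.le_def.mpr (by simp [i']; omega)) (by simp [i']; omega)
    exact ⟨.cons hadj w, by simp [hw, i']; omega⟩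

theorem pathGraph_walk_length_ge {i j : Fin n} (w : (pathGraph n).Walk i j) :
    (i - j : ℕ) + (j - i) ≤ w.length := by
  induction w with
  | nil => simp
  | cons h _ ih =>
    rw [pathGraph_adj] at h
    simp only [Walk.length_cons]
    omega

theorem pathGraph_dist (i j : Fin n) : (pathGraph n).dist i j = (i - j : ℕ) + (j - i) := by
  have hle : (pathGraph n).dist i j ≤ (i - j : ℕ) + (j - i) := by
    rcases le_total i j with hij | hji
    · obtain ⟨w, hw⟩ := pathGraph_exists_walk_length_eq hij
      exact (dist_le w).trans (by omega)
    · obtain ⟨w, hw⟩ := pathGraph_exists_walk_length_eq hji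
      rw [dist_comm]
      exact (dist_le w).trans (by omega)
  obtain ⟨w, hw⟩ := ((pathGraph_preconnected n) i j).exists_walk_length_eq_dist
  exact le_antisymm hle (hw ▸ pathGraph_walk_length_ge w)

theorem card_pathGraph_dist_le (c : Fin n) (r : ℕ) :
    #{u | (pathGraph n).dist c u ≤ r} ≤ 2 * r + 1 := by
  calc #{u | (pathGraph n).dist c u ≤ r} ≤ #(Icc (c - r : ℕ) (c + r)) := by
        refine card_le_card_of_injOn Fin.val (fun u hu => ?_) Fin.val_injective.injOn
        simp only [coe_filter, mem_univ, true_and, Set.mem_ofPred_eq, pathGraph_dist] at hu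
        simp only [coe_Icc, Set.mem_Icc]
        omega
    _ ≤ 2 * r + 1 := by rw [Nat.card_Icc]; omega

theorem IsBurningSequence.pathGraph_le_sq {k : ℕ} {v : Fin k → Fin n}
    (hv : (pathGraph n).IsBurningSequence v) : n ≤ k ^ 2 :=
  calc n = Fintype.card (Fin n) := (Fintype.card_fin n).symm
    _ ≤ ∑ i : Fin k, #{u | (pathGraph n).dist (v i) u ≤ k - 1 - i.val} := hv.card_le_sum
    _ ≤ ∑ i : Fin k, (2 * (k - 1 - i.val) + 1) :=
      sum_le_sum fun i _ => card_pathGraph_dist_le _ _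
    _ = k ^ 2 := by
      rw [Fin.sum_univ_eq_sum_range (fun i => 2 * (k - 1 - i) + 1),
        sum_range_reflect (fun r => 2 * r + 1), sum_range_two_mul_add_one]

theorem pathGraph_exists_isBurningSequence {k : ℕ} (hn : 0 < n) (hk : n ≤ k ^ 2) :
    ∃ v : Fin k → Fin n, (pathGraph n).IsBurningSequence v := by
  refine ⟨fun i => ⟨min ((k - 1 - i) * (k - 1 - i) + (k - 1 - i)) (n - 1), by omega⟩, ?_⟩
  intro u
  set r := Nat.sqrt u
  have hr_lo : r * r ≤ u := Nat.sqrt_le u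
  have hr_hi : u < r * r + 2 * r + 1 := by nlinarith [Nat.lt_succ_sqrt u]
  have hrk : r < k := Nat.sqrt_lt'.mpr (u.isLt.trans_le hk)
  refine ⟨⟨k - 1 - r, by omega⟩, ?_⟩
  have hrad : k - 1 - (k - 1 - r) = r := by omega
  simp only [hrad, pathGraph_dist]
  omega

theorem pathGraph_exists_isBurningSequence_iff {k : ℕ} (hn : 0 < n) :
    (∃ v : Fin k → Fin n, (pathGraph n).IsBurningSequence v) ↔ n ≤ k ^ 2 :=
  ⟨fun ⟨_, hv⟩ => hv.pathGraph_le_sq, pathGraph_exists_isBurningSequence hn⟩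

end SimpleGraph

open SimpleGraph in
theorem burning_path (n : ℕ) (hn : 1 ≤ n) :
    burningNumber (SimpleGraph.pathGraph n) = ⌈Real.sqrt n⌉₊ := by
  have hburns : {k | ∃ v : Fin k → Fin n, (pathGraph n).IsBurningSequence v} =
      Set.Ici ⌈Real.sqrt n⌉₊ := by
    ext k
    rw [Set.mem_ofPred_eq, pathGraph_exists_isBurningSequence_iff hn, Set.mem_Ici, Nat.ceil_le,
      Real.sqrt_le_left k.cast_nonneg]
    exact_mod_cast Iff.rfl
  rw [burningNumber_eq_sInf, hburns, csInf_Ici]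
end

section
/- Let G be a graph and H a rooted graph with root r_H. Then b(G ∘ H) ≤ b(G) + ecc(r_H), where G ∘ H is the rooted product and ecc(r_H) is the eccentricity of r_H in H. -/
def rootedProduct {α β : Type*} (G : SimpleGraph α) (H : SimpleGraph β) (r : β) :
    SimpleGraph (α × β) :=
  SimpleGraph.fromRel (fun p q =>
    (p.1 = q.1 ∧ H.Adj p.2 q.2) ∨ (p.2 = r ∧ q.2 = r ∧ G.Adj p.1 q.1))

noncomputable def eccentricity {β : Type*} [Fintype β] (H : SimpleGraph β) (v : β) : ℕ :=
  Finset.univ.sup (fun u => H.dist v u)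

section Burning

variable {V W : Type*} {G : SimpleGraph V} {k : ℕ}

def IsBurningSequence (G : SimpleGraph V) (v : Fin k → V) : Prop :=
  ∀ u : V, ∃ i : Fin k, G.dist (v i) u ≤ k - 1 - i.val

theorem burningNumber_le {v : Fin k → V} (hv : IsBurningSequence G v) : burningNumber G ≤ k :=
  Nat.sInf_le ⟨v, hv⟩

theorem isBurningSequence_equivFin_symm [Fintype V] (G : SimpleGraph V) :
    IsBurningSequence G (Fintype.equivFin V).symm :=
  fun u => ⟨Fintype.equivFin V u, by simp⟩

theorem exists_isBurningSequence_burningNumber [Fintype V] (G : SimpleGraph V) :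
    ∃ v : Fin (burningNumber G) → V, IsBurningSequence G v :=
  Nat.sInf_mem (s := {k | ∃ v : Fin k → V, IsBurningSequence G v})
    ⟨_, _, isBurningSequence_equivFin_symm G⟩

theorem IsBurningSequence.comp_append {G' : SimpleGraph W} {e : ℕ} {v : Fin k → V}
    (hv : IsBurningSequence G v) (f : V → W)
    (hf : ∀ w, ∃ u, ∀ x, G'.dist (f x) w ≤ G.dist x u + e) (p : Fin e → W) :
    IsBurningSequence G' (Fin.append (f ∘ v) p) := by
  intro w
  obtain ⟨u, hu⟩ := hf w
  obtain ⟨i, hi⟩ := hv u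
  refine ⟨Fin.castAdd e i, ?_⟩
  rw [Fin.append_left, Function.comp_apply, Fin.val_castAdd]
  have := hu (v i)
  omega

end Burning

theorem dist_le_eccentricity {β : Type*} [Fintype β] (H : SimpleGraph β) (v u : β) :
    H.dist v u ≤ eccentricity H v :=
  Finset.le_sup (f := fun u => H.dist v u) (Finset.mem_univ u)

namespace rootedProduct

variable {α β : Type*} (G : SimpleGraph α) (H : SimpleGraph β) (r : β)

def baseHom : G →g rootedProduct G H r where
  toFun a := (a, r)
  map_rel' h := ⟨fun he => h.ne (congrArg Prod.fst he), Or.inl (Or.inr ⟨rfl, rfl, h⟩)⟩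

def fiberHom (a : α) : H →g rootedProduct G H r where
  toFun b := (a, b)
  map_rel' h := ⟨fun he => h.ne (congrArg Prod.snd he), Or.inl (Or.inl ⟨rfl, h⟩)⟩

variable {G H r}

theorem dist_le {c a : α} {b : β} (hG : G.Reachable c a) (hH : H.Reachable r b) :
    (rootedProduct G H r).dist (c, r) (a, b) ≤ G.dist c a + H.dist r b := by
  obtain ⟨p, hp⟩ := hG.exists_walk_length_eq_dist
  obtain ⟨q, hq⟩ := hH.exists_walk_length_eq_dist
  calc (rootedProduct G H r).dist (c, r) (a, b)
      ≤ ((p.map (baseHom G H r)).append (q.map (fiberHom G H r a))).length :=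
        SimpleGraph.dist_le _
    _ = G.dist c a + H.dist r b := (SimpleGraph.Walk.length_append _ _).trans <|
        congrArg₂ (· + ·) ((p.length_map _).trans hp) ((q.length_map _).trans hq)

end rootedProduct

theorem burning_rootedProduct_le {α β : Type*} [Fintype α] [Fintype β]
    (G : SimpleGraph α) (H : SimpleGraph β) (rH : β)
    (hG : G.Connected) (hH : H.Connected) :
    burningNumber (rootedProduct G H rH) ≤ burningNumber G + eccentricity H rH := by
  obtain ⟨v, hv⟩ := exists_isBurningSequence_burningNumber G
  obtain ⟨a₀⟩ := hG.nonempty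
  refine burningNumber_le (hv.comp_append (fun a => (a, rH)) ?_ fun _ => (a₀, rH))
  rintro ⟨a, b⟩
  exact ⟨a, fun x => (rootedProduct.dist_le (hG.preconnected x a) (hH.preconnected rH b)).trans
    (Nat.add_le_add_left (dist_le_eccentricity H rH b) _)⟩
end

section
/- For any graph G, the uniform-radius burning parameter b̂(G) satisfies b̂(G) ≤ b(G) ≤ 2·b̂(G). -/
noncomputable def coverNumber {V : Type*} (G : SimpleGraph V) (r : ℕ) : ℕ :=
  sInf {k | ∃ v : Fin k → V, ∀ u : V, ∃ i : Fin k, G.dist (v i) u ≤ r}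

noncomputable def uniformBurningNumber {V : Type*} (G : SimpleGraph V) : ℕ :=
  sInf {r | 1 ≤ r ∧ coverNumber G (r - 1) ≤ r}

theorem uniform_burning_bounds {V : Type*} [Fintype V] (G : SimpleGraph V)
    (hG : G.Connected) :
    uniformBurningNumber G ≤ burningNumber G ∧
      burningNumber G ≤ 2 * uniformBurningNumber G := by
  classical
  haveI : Nonempty V := hG.nonempty
  set n := Fintype.card V with hn
  have hnpos : 1 ≤ n := Fintype.card_pos
  -- n belongs to the burning set
  have hnB : n ∈ {k | ∃ v : Fin k → V, ∀ u : V, ∃ i : Fin k,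
      G.dist (v i) u ≤ k - 1 - i.val} := by
    refine ⟨(Fintype.equivFin V).symm, fun u => ⟨Fintype.equivFin V u, ?_⟩⟩
    simp [SimpleGraph.dist_self]
  have hbB : burningNumber G ∈ {k | ∃ v : Fin k → V, ∀ u : V, ∃ i : Fin k,
      G.dist (v i) u ≤ k - 1 - i.val} := Nat.sInf_mem ⟨n, hnB⟩
  obtain ⟨v, hv⟩ := hbB
  have hk1 : 1 ≤ burningNumber G := by
    by_contra h
    push_neg at h
    obtain ⟨i, _⟩ := hv (Classical.arbitrary V)
    have := i.isLt
    omega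
  -- first inequality
  have h1 : uniformBurningNumber G ≤ burningNumber G := by
    apply Nat.sInf_le
    refine ⟨hk1, Nat.sInf_le ?_⟩
    refine ⟨v, fun u => ?_⟩
    obtain ⟨i, hi⟩ := hv u
    exact ⟨i, hi.trans (by omega)⟩
  -- uniform burning number witness
  have hrmem : uniformBurningNumber G ∈ {r | 1 ≤ r ∧ coverNumber G (r - 1) ≤ r} := by
    apply Nat.sInf_mem
    refine ⟨n, hnpos, Nat.sInf_le (show n ∈ {k | ∃ v : Fin k → V,
      ∀ u : V, ∃ i : Fin k, G.dist (v i) u ≤ n - 1} from ?_)⟩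
    refine ⟨(Fintype.equivFin V).symm, fun u => ⟨Fintype.equivFin V u, ?_⟩⟩
    simp [SimpleGraph.dist_self]
  set r := uniformBurningNumber G with hr
  obtain ⟨hr1, hrc⟩ := hrmem
  clear_value r
  -- cover number witness
  set m := coverNumber G (r - 1) with hm
  have hmmem : m ∈ {k | ∃ w : Fin k → V, ∀ u : V, ∃ i : Fin k,
      G.dist (w i) u ≤ r - 1} := by
    rw [hm]
    refine Nat.sInf_mem ⟨n, ?_⟩
    refine ⟨(Fintype.equivFin V).symm, fun u => ⟨Fintype.equivFin V u, ?_⟩⟩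
    simp [SimpleGraph.dist_self]
  clear_value m
  obtain ⟨w, hw⟩ := hmmem
  have hm1 : 1 ≤ m := by
    by_contra h
    push_neg at h
    obtain ⟨i, _⟩ := hw (Classical.arbitrary V)
    have := i.isLt
    omega
  -- second inequality
  refine ⟨h1, Nat.sInf_le ?_⟩
  refine ⟨fun j => if h : j.val < m then w ⟨j.val, h⟩ else w ⟨0, hm1⟩, fun u => ?_⟩
  obtain ⟨i, hi⟩ := hw u
  have hilt : i.val < 2 * r := by have := i.isLt; omega
  refine ⟨⟨i.val, hilt⟩, ?_⟩
  have him := i.isLt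
  simp only [dif_pos him, Fin.eta]
  refine hi.trans ?_
  have h3 : m ≤ r := hrc
  omega
end

section
/- For the comb graph C_{n,m} and radius r ≥ m, the minimum number of radius-r balls needed to cover all vertices equals ⌈ n / (2(r−m+1)+1) ⌉. -/
def comb (n m : ℕ) : SimpleGraph (Fin n × Fin m) :=
  SimpleGraph.fromRel (fun p q =>
    (p.1 = q.1 ∧ p.2.val + 1 = q.2.val) ∨
    (p.2.val = 0 ∧ q.2.val = 0 ∧ p.1.val + 1 = q.1.val))

namespace CombAux

open SimpleGraph

variable {n m : ℕ}

lemma adj_tooth (i : Fin n) (j j' : Fin m) (h : j.val + 1 = j'.val) :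
    (comb n m).Adj (i, j) (i, j') := by
  refine ⟨?_, Or.inl (Or.inl ⟨rfl, h⟩)⟩
  intro hc
  have : j = j' := (Prod.ext_iff.mp hc).2
  have : j.val = j'.val := by rw [this]
  omega

lemma adj_spine (hm : 0 < m) (a b : Fin n) (h : a.val + 1 = b.val) :
    (comb n m).Adj (a, ⟨0, hm⟩) (b, ⟨0, hm⟩) := by
  refine ⟨?_, Or.inl (Or.inr ⟨rfl, rfl, h⟩)⟩
  intro hc
  have : a = b := (Prod.ext_iff.mp hc).1
  have : a.val = b.val := by rw [this]
  omega

lemma walk_tooth (hm : 0 < m) (i : Fin n) :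
    ∀ (d : ℕ) (j : Fin m), j.val = d →
      ∃ p : (comb n m).Walk (i, ⟨0, hm⟩) (i, j), p.length ≤ d := by
  intro d
  induction d with
  | zero =>
    intro j hj
    have : j = ⟨0, hm⟩ := Fin.ext hj
    subst this
    exact ⟨SimpleGraph.Walk.nil, by simp⟩
  | succ d ih =>
    intro j hj
    have hd : d < m := by omega
    obtain ⟨p, hp⟩ := ih ⟨d, hd⟩ rfl
    refine ⟨p.concat (adj_tooth i ⟨d, hd⟩ j (by simp [hj])), ?_⟩
    rw [SimpleGraph.Walk.length_concat]
    omega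

lemma walk_spine (hm : 0 < m) :
    ∀ (d : ℕ) (a b : Fin n), a.val + d = b.val →
      ∃ p : (comb n m).Walk (a, ⟨0, hm⟩) (b, ⟨0, hm⟩), p.length ≤ d := by
  intro d
  induction d with
  | zero =>
    intro a b hab
    have : a = b := Fin.ext (by omega)
    subst this
    exact ⟨SimpleGraph.Walk.nil, by simp⟩
  | succ d ih =>
    intro a b hab
    have hd : a.val + d < n := by omega
    obtain ⟨p, hp⟩ := ih a ⟨a.val + d, hd⟩ rfl
    refine ⟨p.concat (adj_spine hm ⟨a.val + d, hd⟩ b (by simp; omega)), ?_⟩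
    rw [SimpleGraph.Walk.length_concat]
    omega

lemma walk_spine' (hm : 0 < m) (a b : Fin n) :
    ∃ p : (comb n m).Walk (a, ⟨0, hm⟩) (b, ⟨0, hm⟩),
      p.length ≤ (a.val - b.val) + (b.val - a.val) := by
  rcases le_total a.val b.val with h | h
  · obtain ⟨p, hp⟩ := walk_spine hm (b.val - a.val) a b (by omega)
    exact ⟨p, by omega⟩
  · obtain ⟨p, hp⟩ := walk_spine hm (a.val - b.val) b a (by omega)
    exact ⟨p.reverse, by rw [SimpleGraph.Walk.length_reverse]; omega⟩

lemma walk_any (hm : 0 < m) (a i : Fin n) (b j : Fin m) :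
    ∃ p : (comb n m).Walk (a, b) (i, j),
      p.length ≤ b.val + ((a.val - i.val) + (i.val - a.val)) + j.val := by
  obtain ⟨p1, hp1⟩ := walk_tooth hm a b.val b rfl
  obtain ⟨p2, hp2⟩ := walk_spine' hm a i
  obtain ⟨p3, hp3⟩ := walk_tooth hm i j.val j rfl
  refine ⟨(p1.reverse.append p2).append p3, ?_⟩
  simp only [SimpleGraph.Walk.length_append, SimpleGraph.Walk.length_reverse]
  omega

lemma dist_upper (hm : 0 < m) (a i : Fin n) (b j : Fin m) :
    (comb n m).dist (a, b) (i, j) ≤ b.val + ((a.val - i.val) + (i.val - a.val)) + j.val := by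
  obtain ⟨p, hp⟩ := walk_any hm a i b j
  exact (SimpleGraph.dist_le p).trans hp

lemma walk_lip {V : Type*} {G : SimpleGraph V} (g : V → ℕ)
    (hg : ∀ x y, G.Adj x y → g x ≤ g y + 1) :
    ∀ {u v : V} (p : G.Walk u v), g u ≤ g v + p.length := by
  intro u v p
  induction p with
  | nil => simp
  | @cons u w v h p ih =>
    have h1 := hg _ _ h
    simp only [SimpleGraph.Walk.length_cons]
    omega

/-- Key lower bound: if a ball of radius `r` centered at `p` contains the
tooth tip `(i, m-1)`, then the spine distance from `p.1` to `i` is at most `r - (m-1)`. -/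
lemma tip_lower (hm : 0 < m) (hmlt : m - 1 < m) (p : Fin n × Fin m) (i : Fin n) {r : ℕ}
    (hmr : m - 1 ≤ r)
    (h : (comb n m).dist p (i, ⟨m - 1, hmlt⟩) ≤ r) :
    (p.1.val - i.val) + (i.val - p.1.val) ≤ r - (m - 1) := by
  obtain ⟨a, b⟩ := p
  let g : Fin n × Fin m → ℕ := fun q =>
    if q.1.val = i.val then (m - 1) - q.2.val
    else q.2.val + ((q.1.val - i.val) + (i.val - q.1.val)) + (m - 1)
  have hlip : ∀ x y, (comb n m).Adj x y → g x ≤ g y + 1 := by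
    rintro ⟨x1, x2⟩ ⟨y1, y2⟩ ⟨hne, hrel⟩
    have hx2 := x2.isLt
    have hy2 := y2.isLt
    have key : (x1.val = y1.val ∧ x2.val + 1 = y2.val) ∨
        (x2.val = 0 ∧ y2.val = 0 ∧ x1.val + 1 = y1.val) ∨
        (x1.val = y1.val ∧ y2.val + 1 = x2.val) ∨
        (x2.val = 0 ∧ y2.val = 0 ∧ y1.val + 1 = x1.val) := by
      rcases hrel with (⟨h1, h2⟩ | ⟨h1, h2, h3⟩) | (⟨h1, h2⟩ | ⟨h1, h2, h3⟩)
      · have h1' : x1.val = y1.val := congrArg Fin.val h1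
        have h2' : x2.val + 1 = y2.val := h2
        exact Or.inl ⟨h1', h2'⟩
      · have h1' : x2.val = 0 := h1
        have h2' : y2.val = 0 := h2
        have h3' : x1.val + 1 = y1.val := h3
        exact Or.inr (Or.inl ⟨h1', h2', h3'⟩)
      · have h1' : y1.val = x1.val := congrArg Fin.val h1
        have h2' : y2.val + 1 = x2.val := h2
        exact Or.inr (Or.inr (Or.inl ⟨h1'.symm, h2'⟩))
      · have h1' : y2.val = 0 := h1
        have h2' : x2.val = 0 := h2
        have h3' : y1.val + 1 = x1.val := h3
        exact Or.inr (Or.inr (Or.inr ⟨h2', h1', h3'⟩))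
    show (if x1.val = i.val then (m - 1) - x2.val
        else x2.val + ((x1.val - i.val) + (i.val - x1.val)) + (m - 1)) ≤
      (if y1.val = i.val then (m - 1) - y2.val
        else y2.val + ((y1.val - i.val) + (i.val - y1.val)) + (m - 1)) + 1
    split_ifs <;> omega
  have hreach : (comb n m).Reachable (a, b) (i, ⟨m - 1, hmlt⟩) :=
    ⟨(walk_any hm a i b ⟨m - 1, hmlt⟩).choose⟩
  obtain ⟨q, hq⟩ := hreach.exists_walk_length_eq_dist
  have hwl := walk_lip g hlip q
  rw [hq] at hwl
  have h0 : g (i, ⟨m - 1, hmlt⟩) = 0 := by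
    show (if i.val = i.val then (m - 1) - (m - 1) else _) = 0
    simp
  have hga : g (a, b) ≤ r := by omega
  show (a.val - i.val) + (i.val - a.val) ≤ r - (m - 1)
  by_cases hai : a.val = i.val
  · omega
  · have h2 : g (a, b) = b.val + ((a.val - i.val) + (i.val - a.val)) + (m - 1) :=
      if_neg hai
    omega

lemma L1 (n s : ℕ) (hn : 1 ≤ n) : n ≤ ((n + 2 * s) / (2 * s + 1)) * (2 * s + 1) := by
  have h1 := Nat.div_add_mod (n + 2 * s) (2 * s + 1)
  have h2 := Nat.mod_lt (n + 2 * s) (y := 2 * s + 1) (by omega)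
  rw [Nat.mul_comm]
  omega

lemma L2 (n s k : ℕ) (hs : 1 ≤ s) (h : n ≤ k * (2 * s + 1)) :
    (n + 2 * s) / (2 * s + 1) ≤ k := by
  calc (n + 2 * s) / (2 * s + 1)
      ≤ (2 * s + k * (2 * s + 1)) / (2 * s + 1) := Nat.div_le_div_right (by omega)
    _ = 2 * s / (2 * s + 1) + k := Nat.add_mul_div_right _ _ (by omega)
    _ = k := by rw [Nat.div_eq_of_lt (by omega)]; omega

lemma exists_block (s n i : ℕ) (hs : 1 ≤ s) (hn : 1 ≤ n) (hi : i < n) :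
    ∃ t, t < (n + 2 * s) / (2 * s + 1) ∧
      (min (t * (2 * s + 1) + s) (n - 1) - i) + (i - min (t * (2 * s + 1) + s) (n - 1)) ≤ s := by
  refine ⟨i / (2 * s + 1), ?_, ?_⟩
  · rw [Nat.div_lt_iff_lt_mul (by omega)]
    have := L1 n s hn
    omega
  · have hA : i / (2 * s + 1) * (2 * s + 1) ≤ i := Nat.div_mul_le_self i (2 * s + 1)
    have hB : i < i / (2 * s + 1) * (2 * s + 1) + (2 * s + 1) :=
      Nat.lt_div_mul_add (by omega)
    omega

end CombAux

theorem coverNumber_comb_large_radius (n m r : ℕ) (hn : 1 ≤ n) (hm : 1 ≤ m) (hr : m ≤ r) :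
    coverNumber (comb n m) r = (n + 2 * (r - m + 1)) / (2 * (r - m + 1) + 1) := by
  set s := r - m + 1 with hs
  have hspos : 1 ≤ s := by omega
  have hmpos : 0 < m := hm
  have hmlt : m - 1 < m := by omega
  have hmem : (n + 2 * s) / (2 * s + 1) ∈ {k | ∃ v : Fin k → Fin n × Fin m,
      ∀ u : Fin n × Fin m, ∃ i : Fin k, (comb n m).dist (v i) u ≤ r} := by
    refine ⟨fun t => (⟨min (t.val * (2 * s + 1) + s) (n - 1), by omega⟩, ⟨0, hmpos⟩), ?_⟩
    rintro ⟨i, j⟩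
    obtain ⟨t, htlt, hmin⟩ := CombAux.exists_block s n i.val hspos hn i.isLt
    refine ⟨⟨t, htlt⟩, ?_⟩
    have hlt : min (t * (2 * s + 1) + s) (n - 1) < n := by omega
    have hub : (comb n m).dist
        ((⟨min (t * (2 * s + 1) + s) (n - 1), hlt⟩ : Fin n), (⟨0, hmpos⟩ : Fin m)) (i, j) ≤
        0 + ((min (t * (2 * s + 1) + s) (n - 1) - i.val)
          + (i.val - min (t * (2 * s + 1) + s) (n - 1))) + j.val :=
      CombAux.dist_upper hmpos _ i _ j
    have hj := j.isLt
    exact le_trans hub (by omega)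
  apply le_antisymm
  · exact Nat.sInf_le hmem
  · refine le_csInf ⟨_, hmem⟩ ?_
    rintro k ⟨v, hv⟩
    choose F hF using fun i : Fin n => hv (i, ⟨m - 1, hmlt⟩)
    have hFdist : ∀ i : Fin n,
        ((v (F i)).1.val - i.val) + (i.val - (v (F i)).1.val) ≤ s := by
      intro i
      have h := CombAux.tip_lower hmpos hmlt (v (F i)) i (by omega) (hF i)
      omega
    have hcount : n ≤ k * (2 * s + 1) := by
      have hcard : (Finset.univ : Finset (Fin n)).card =
          ∑ t : Fin k, (Finset.univ.filter fun i => F i = t).card :=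
        Finset.card_eq_sum_card_fiberwise (fun i _ => Finset.mem_univ (F i))
      have hfiber : ∀ t : Fin k,
          (Finset.univ.filter fun i => F i = t).card ≤ 2 * s + 1 := by
        intro t
        have hsub : ∀ i ∈ Finset.univ.filter fun i => F i = t,
            i.val ∈ Finset.Icc ((v t).1.val - s) ((v t).1.val + s) := by
          intro i hi
          simp only [Finset.mem_filter, Finset.mem_univ, true_and] at hi
          have := hFdist i
          rw [hi] at this
          simp only [Finset.mem_Icc]
          omega
        calc (Finset.univ.filter fun i => F i = t).card
            ≤ (Finset.Icc ((v t).1.val - s) ((v t).1.val + s)).card :=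
              Finset.card_le_card_of_injOn (fun i => i.val) hsub
                (fun x _ y _ h => Fin.ext h)
          _ ≤ 2 * s + 1 := by rw [Nat.card_Icc]; omega
      have hle : (Finset.univ : Finset (Fin n)).card ≤ ∑ _t : Fin k, (2 * s + 1) := by
        rw [hcard]
        exact Finset.sum_le_sum fun t _ => hfiber t
      simpa using hle
    exact CombAux.L2 n s k hspos hcount
end

section
/- For the comb graph C_{n,m} with ⌊m/2⌋ ≤ r < m, the minimum number of radius-r balls needed to cover all vertices equals n. -/
namespace CombAux

open SimpleGraph

lemma adj_tooth_s6 {n m : ℕ} (j : Fin n) (k : ℕ) (h : k + 1 < m) :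
    (comb n m).Adj (j, ⟨k, by omega⟩) (j, ⟨k + 1, h⟩) := by
  rw [comb, SimpleGraph.fromRel_adj]
  refine ⟨?_, Or.inl (Or.inl ⟨rfl, rfl⟩)⟩
  simp [Prod.ext_iff, Fin.ext_iff]

lemma adj_spine_s6 {n m : ℕ} (j : ℕ) (h : j + 1 < n) (hm : 0 < m) :
    (comb n m).Adj (⟨j, by omega⟩, ⟨0, hm⟩) (⟨j + 1, h⟩, ⟨0, hm⟩) := by
  rw [comb, SimpleGraph.fromRel_adj]
  refine ⟨?_, Or.inl (Or.inr ⟨rfl, rfl, rfl⟩)⟩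
  simp [Prod.ext_iff, Fin.ext_iff]

lemma tooth_walk {n m : ℕ} (j : Fin n) :
    ∀ (d a : ℕ) (h : a + d < m),
      ∃ w : (comb n m).Walk (j, ⟨a, by omega⟩) (j, ⟨a + d, h⟩), w.length = d := by
  intro d
  induction d with
  | zero => intro a h; exact ⟨SimpleGraph.Walk.nil, rfl⟩
  | succ d ih =>
    intro a h
    obtain ⟨w, hw⟩ := ih a (by omega)
    refine ⟨w.concat (adj_tooth_s6 j (a + d) (by omega)), ?_⟩
    rw [SimpleGraph.Walk.length_concat, hw]

lemma tooth_dist {n m : ℕ} (j : Fin n) (a b : Fin m) (hab : a.val ≤ b.val) :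
    (comb n m).dist (j, a) (j, b) ≤ b.val - a.val := by
  have hb := b.isLt
  obtain ⟨w, hw⟩ := tooth_walk (m := m) j (b.val - a.val) a.val
    (show a.val + (b.val - a.val) < m by omega)
  have h1 : (j, (⟨a.val, by omega⟩ : Fin m)) = (j, a) := by
    simp [Prod.ext_iff, Fin.ext_iff]
  have h2 : (j, (⟨a.val + (b.val - a.val), by omega⟩ : Fin m)) = (j, b) := by
    simp [Prod.ext_iff, Fin.ext_iff]; omega
  calc (comb n m).dist (j, a) (j, b) ≤ (w.copy h1 h2).length :=
        SimpleGraph.dist_le _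
  _ = w.length := SimpleGraph.Walk.length_copy _ _ _
  _ = b.val - a.val := hw

lemma reach_base {n m : ℕ} (hm : 0 < m) (j : Fin n) :
    ∀ (k : ℕ) (hk : k < m), (comb n m).Reachable (j, ⟨k, hk⟩) (j, ⟨0, hm⟩) := by
  intro k
  induction k with
  | zero => intro hk; exact SimpleGraph.Reachable.refl _
  | succ k ih =>
    intro hk
    exact ((adj_tooth_s6 j k hk).symm.reachable).trans (ih (by omega))

lemma reach_spine {n m : ℕ} (hn : 0 < n) (hm : 0 < m) :
    ∀ (k : ℕ) (hk : k < n),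
      (comb n m).Reachable (⟨k, hk⟩, ⟨0, hm⟩) (⟨0, hn⟩, ⟨0, hm⟩) := by
  intro k
  induction k with
  | zero => intro hk; exact SimpleGraph.Reachable.refl _
  | succ k ih =>
    intro hk
    exact ((adj_spine_s6 k hk hm).symm.reachable).trans (ih (by omega))

lemma comb_reachable {n m : ℕ} (hn : 0 < n) (hm : 0 < m)
    (p q : Fin n × Fin m) : (comb n m).Reachable p q := by
  have key : ∀ u : Fin n × Fin m,
      (comb n m).Reachable u ((⟨0, hn⟩ : Fin n), (⟨0, hm⟩ : Fin m)) := by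
    rintro ⟨⟨a, ha⟩, ⟨b, hb⟩⟩
    exact (reach_base hm _ b hb).trans (reach_spine hn hm a ha)
  exact (key p).trans (key q).symm

lemma walk_lip_s6 {V : Type*} {G : SimpleGraph V} (f : V → ℤ)
    (hf : ∀ u v, G.Adj u v → |f u - f v| ≤ 1) :
    ∀ {a b : V} (w : G.Walk a b), |f a - f b| ≤ w.length := by
  intro a b w
  induction w with
  | nil => simp
  | @cons a c b h w ih =>
    have h1 := hf a c h
    calc |f a - f b| ≤ |f a - f c| + |f c - f b| := by
          have := abs_sub_le (f a) (f c) (f b); linarith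
    _ ≤ 1 + w.length := by linarith
    _ = (w.cons h).length := by simp [SimpleGraph.Walk.length_cons]; ring

def pot {n m : ℕ} (j : Fin n) (p : Fin n × Fin m) : ℤ :=
  if p.1 = j then (p.2.val : ℤ)
  else -(p.2.val : ℤ) - |(p.1.val : ℤ) - (j.val : ℤ)|

lemma pot_lip {n m : ℕ} (j : Fin n) {u v : Fin n × Fin m}
    (hadj : (comb n m).Adj u v) : |pot j u - pot j v| ≤ 1 := by
  rw [comb, SimpleGraph.fromRel_adj] at hadj
  obtain ⟨hneq, hrel⟩ := hadj
  have main : ∀ p q : Fin n × Fin m,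
      (p.1 = q.1 ∧ p.2.val + 1 = q.2.val) ∨
      (p.2.val = 0 ∧ q.2.val = 0 ∧ p.1.val + 1 = q.1.val) →
        |pot j p - pot j q| ≤ 1 := by
    rintro p q (⟨he, hv⟩ | ⟨hp0, hq0, hs⟩)
    · have hv' : (p.2.val : ℤ) + 1 = (q.2.val : ℤ) := by exact_mod_cast hv
      unfold pot
      rw [he]
      split
      · rw [abs_le]; constructor <;> linarith
      · rw [abs_le]; constructor <;> linarith
    · have hs' : (p.1.val : ℤ) + 1 = (q.1.val : ℤ) := by exact_mod_cast hs
      unfold pot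
      by_cases h1 : p.1 = j
      · have hj : (j.val : ℤ) = (p.1.val : ℤ) := by rw [h1]
        have h2 : ¬ (q.1 = j) := by
          intro h2
          have : (q.1.val : ℤ) = (j.val : ℤ) := by rw [h2]
          omega
        rw [if_pos h1, if_neg h2]
        have hA : |(q.1.val : ℤ) - (j.val : ℤ)| = 1 := by
          rw [abs_eq (by norm_num)]; omega
        rw [hA, hp0, hq0, abs_le]; constructor <;> norm_num
      · by_cases h2 : q.1 = j
        · have hj : (j.val : ℤ) = (q.1.val : ℤ) := by rw [h2]
          rw [if_neg h1, if_pos h2]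
          have hA : |(p.1.val : ℤ) - (j.val : ℤ)| = 1 := by
            rw [abs_eq (by norm_num)]; omega
          rw [hA, hp0, hq0, abs_le]; constructor <;> norm_num
        · rw [if_neg h1, if_neg h2]
          have e1 := abs_sub_abs_le_abs_sub ((p.1.val : ℤ) - j.val) ((q.1.val : ℤ) - j.val)
          have e2 := abs_sub_abs_le_abs_sub ((q.1.val : ℤ) - j.val) ((p.1.val : ℤ) - j.val)
          have e3 : |(p.1.val : ℤ) - j.val - ((q.1.val : ℤ) - j.val)| = 1 := by
            rw [abs_eq (by norm_num)]; omega
          have e4 : |(q.1.val : ℤ) - j.val - ((p.1.val : ℤ) - j.val)| = 1 := by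
            rw [abs_eq (by norm_num)]; omega
          rw [e3] at e1; rw [e4] at e2
          have hp0' : (p.2.val : ℤ) = 0 := by exact_mod_cast hp0
          have hq0' : (q.2.val : ℤ) = 0 := by exact_mod_cast hq0
          rw [hp0', hq0', abs_le]; constructor <;> linarith
  rcases hrel with h | h
  · exact main u v h
  · have := main v u h
    rwa [abs_sub_comm] at this

lemma column_eq {n m r : ℕ} (hn : 0 < n) (hm : 0 < m) (hr : r < m)
    (c : Fin n × Fin m) (j : Fin n)
    (hd : (comb n m).dist c (j, ⟨m - 1, by omega⟩) ≤ r) : c.1 = j := by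
  by_contra hne
  have hm1 : m - 1 < m := by omega
  set t : Fin n × Fin m := (j, ⟨m - 1, hm1⟩) with ht
  have hd' : (comb n m).dist c t ≤ r := hd
  have hreach := comb_reachable hn hm c t
  obtain ⟨w, hw⟩ := hreach.exists_walk_length_eq_dist
  have hbound := walk_lip_s6 (pot j) (fun u v h => pot_lip j h) w
  rw [hw] at hbound
  have hfc : pot j c = -(c.2.val : ℤ) - |(c.1.val : ℤ) - (j.val : ℤ)| := by
    rw [pot, if_neg hne]
  have hft : pot j t = ((m : ℤ) - 1) := by
    rw [ht, pot, if_pos rfl]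
    simp only []
    omega
  have habs : 1 ≤ |(c.1.val : ℤ) - (j.val : ℤ)| := by
    refine Int.one_le_abs ?_
    intro hc
    apply hne; ext; omega
  have hc2 : (0:ℤ) ≤ (c.2.val : ℤ) := by positivity
  have hkey : (m : ℤ) ≤ |pot j c - pot j t| := by
    rw [hfc, hft, abs_sub_comm]
    rw [abs_of_nonneg]
    · have hm' : (1:ℤ) ≤ (m : ℤ) := by exact_mod_cast hm
      linarith
    · linarith
  have hdr : ((comb n m).dist c t : ℤ) ≤ (r : ℤ) := by exact_mod_cast hd'
  have hrm : (r : ℤ) < (m : ℤ) := by exact_mod_cast hr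
  linarith

end CombAux

theorem coverNumber_comb_mid_radius (n m r : ℕ) (hn : 1 ≤ n)
    (h1 : m / 2 ≤ r) (h2 : r < m) :
    coverNumber (comb n m) r = n := by
  have hm : 0 < m := by omega
  have hn' : 0 < n := hn
  have h2r : m - 1 ≤ 2 * r := by omega
  have hmem : n ∈ {k | ∃ v : Fin k → Fin n × Fin m,
      ∀ u : Fin n × Fin m, ∃ i : Fin k, (comb n m).dist (v i) u ≤ r} := by
    refine ⟨fun i => (i, ⟨r, h2⟩), ?_⟩
    rintro ⟨j, k⟩
    refine ⟨j, ?_⟩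
    show (comb n m).dist (j, (⟨r, h2⟩ : Fin m)) (j, k) ≤ r
    have hval : ((⟨r, h2⟩ : Fin m)).val = r := rfl
    by_cases hk : k.val ≤ r
    · have h := CombAux.tooth_dist j k (⟨r, h2⟩ : Fin m) (by rw [hval]; exact hk)
      rw [hval] at h
      have h' : (comb n m).dist (j, (⟨r, h2⟩ : Fin m)) (j, k) ≤ r - k.val := by
        rw [SimpleGraph.dist_comm]; exact h
      omega
    · have h := CombAux.tooth_dist j (⟨r, h2⟩ : Fin m) k (by rw [hval]; omega)
      rw [hval] at h
      have := k.isLt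
      omega
  refine le_antisymm (Nat.sInf_le hmem) ?_
  refine le_csInf ⟨n, hmem⟩ ?_
  rintro k ⟨v, hv⟩
  have hg : ∀ j : Fin n, ∃ i : Fin k, (v i).1 = j := by
    intro j
    obtain ⟨i, hi⟩ := hv (j, (⟨m - 1, by omega⟩ : Fin m))
    exact ⟨i, CombAux.column_eq hn' hm h2 (v i) j hi⟩
  choose g hgc using hg
  have hginj : Function.Injective g := by
    intro a b hab
    rw [← hgc a, ← hgc b, hab]
  have := Fintype.card_le_of_injective g hginj
  simpa using this
end

section
/- The burning number of the balanced comb graph C_{n,n} equals n. -/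
open SimpleGraph

lemma comb_adj_tooth {n m : ℕ} (a : Fin n) {j j' : Fin m} (h : j.val + 1 = j'.val) :
    (comb n m).Adj (a, j) (a, j') := by
  rw [comb, SimpleGraph.fromRel_adj]
  refine ⟨?_, Or.inl (Or.inl ⟨rfl, h⟩)⟩
  simp only [ne_eq, Prod.mk.injEq, not_and]
  intro _ hj
  rw [Fin.ext_iff] at hj
  omega

lemma comb_adj_spine {n m : ℕ} {a b : Fin n} {j j' : Fin m} (h : a.val + 1 = b.val)
    (hj : j.val = 0) (hj' : j'.val = 0) : (comb n m).Adj (a, j) (b, j') := by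
  rw [comb, SimpleGraph.fromRel_adj]
  refine ⟨?_, Or.inl (Or.inr ⟨hj, hj', h⟩)⟩
  simp only [ne_eq, Prod.mk.injEq, not_and]
  intro ha
  rw [Fin.ext_iff] at ha
  omega

lemma tooth_walk {n m : ℕ} (a : Fin n) (d : ℕ) :
    ∀ (j j' : Fin m), j.val + d = j'.val →
      ∃ w : (comb n m).Walk (a, j) (a, j'), w.length = d := by
  induction d with
  | zero =>
    intro j j' h
    have : j = j' := Fin.ext (by omega)
    subst this
    exact ⟨SimpleGraph.Walk.nil, rfl⟩
  | succ d ih =>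
    intro j j' h
    have hlt : j.val + 1 < m := by omega
    set j1 : Fin m := ⟨j.val + 1, hlt⟩ with hj1
    obtain ⟨w, hw⟩ := ih j1 j' (by simp [hj1]; omega)
    exact ⟨SimpleGraph.Walk.cons (comb_adj_tooth a rfl) w, by simp [hw]⟩

lemma spine_walk {n m : ℕ} (j : Fin m) (hj : j.val = 0) (d : ℕ) :
    ∀ (a b : Fin n), a.val + d = b.val →
      ∃ w : (comb n m).Walk (a, j) (b, j), w.length = d := by
  induction d with
  | zero =>
    intro a b h
    have : a = b := Fin.ext (by omega)
    subst this
    exact ⟨SimpleGraph.Walk.nil, rfl⟩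
  | succ d ih =>
    intro a b h
    have hlt : a.val + 1 < n := by omega
    set a1 : Fin n := ⟨a.val + 1, hlt⟩ with ha1
    obtain ⟨w, hw⟩ := ih a1 b (by simp [ha1]; omega)
    exact ⟨SimpleGraph.Walk.cons (comb_adj_spine rfl hj hj) w, by simp [hw]⟩

/-- Walk within one tooth (either direction). -/
lemma dist_same_tooth {n m : ℕ} (a : Fin n) (j t : Fin m) :
    (comb n m).dist (a, j) (a, t) ≤ max j.val t.val - min j.val t.val := by
  rcases le_total j.val t.val with h | h
  · obtain ⟨w, hw⟩ := tooth_walk a (t.val - j.val) j t (by omega)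
    calc (comb n m).dist (a, j) (a, t) ≤ w.length := SimpleGraph.dist_le w
    _ = max j.val t.val - min j.val t.val := by omega
  · obtain ⟨w, hw⟩ := tooth_walk a (j.val - t.val) t j (by omega)
    calc (comb n m).dist (a, j) (a, t) ≤ w.reverse.length := SimpleGraph.dist_le w.reverse
    _ = max j.val t.val - min j.val t.val := by simp [hw]; omega

lemma walk_cross {n m : ℕ} (hm : 0 < m) (a b : Fin n) (j t : Fin m) :
    ∃ w : (comb n m).Walk (a, j) (b, t),
      w.length = j.val + (max a.val b.val - min a.val b.val) + t.val := by
  set z : Fin m := ⟨0, hm⟩ with hz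
  obtain ⟨w1, hw1⟩ := tooth_walk a j.val z j (by simp [hz])
  obtain ⟨w3, hw3⟩ := tooth_walk b t.val z t (by simp [hz])
  rcases le_total a.val b.val with h | h
  · obtain ⟨w2, hw2⟩ := spine_walk z rfl (b.val - a.val) a b (by omega)
    refine ⟨w1.reverse.append (w2.append w3), ?_⟩
    simp [hw1, hw2, hw3]; omega
  · obtain ⟨w2, hw2⟩ := spine_walk z rfl (a.val - b.val) b a (by omega)
    refine ⟨w1.reverse.append (w2.reverse.append w3), ?_⟩
    simp [hw1, hw2, hw3]; omega

lemma dist_cross {n m : ℕ} (hm : 0 < m) (a b : Fin n) (j t : Fin m) :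
    (comb n m).dist (a, j) (b, t) ≤ j.val + (max a.val b.val - min a.val b.val) + t.val := by
  obtain ⟨w, hw⟩ := walk_cross hm a b j t
  calc (comb n m).dist (a, j) (b, t) ≤ w.length := SimpleGraph.dist_le w
  _ = _ := hw

def pot {n m : ℕ} (b : Fin n) (p : Fin n × Fin m) : ℤ :=
  if p.1 = b then (p.2.val : ℤ) else -(p.2.val : ℤ)

lemma pot_adj {n m : ℕ} (b : Fin n) {u v : Fin n × Fin m} (h : (comb n m).Adj u v) :
    |pot b u - pot b v| ≤ 1 := by
  rw [comb, SimpleGraph.fromRel_adj] at h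
  obtain ⟨-, h⟩ := h
  rw [abs_le]
  unfold pot
  rcases h with (⟨h1, h2⟩ | ⟨h1, h2, -⟩) | (⟨h1, h2⟩ | ⟨h1, h2, -⟩)
  · rw [h1]; split_ifs <;> omega
  · split_ifs <;> omega
  · rw [h1]; split_ifs <;> omega
  · split_ifs <;> omega

lemma pot_walk {n m : ℕ} (b : Fin n) : ∀ {u v : Fin n × Fin m}
    (w : (comb n m).Walk u v), |pot b u - pot b v| ≤ (w.length : ℤ) := by
  intro u v w
  induction w with
  | nil => simp
  | @cons x y z h p ih =>
    have h1 := pot_adj b h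
    have h2 := abs_sub_le (pot b x) (pot b y) (pot b z)
    simp only [SimpleGraph.Walk.length_cons]
    push_cast
    linarith

/-- Any vertex within distance `< n-1` of a tooth tip lies on the same tooth. -/
lemma tip_far {n : ℕ} (hn : 1 ≤ n) (a b : Fin n) (j : Fin n) (hab : a ≠ b) :
    n - 1 ≤ (comb n n).dist (a, j) (b, ⟨n - 1, by omega⟩) := by
  obtain ⟨w0, -⟩ := walk_cross (by omega : 0 < n) a b j ⟨n - 1, by omega⟩
  obtain ⟨w, hw⟩ := (SimpleGraph.Reachable.exists_walk_length_eq_dist ⟨w0⟩ :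
    ∃ w : (comb n n).Walk (a, j) (b, ⟨n - 1, by omega⟩), w.length = (comb n n).dist _ _)
  have := pot_walk b w
  rw [hw] at this
  have hja : pot b (a, j) = -(j.val : ℤ) := by simp [pot, hab]
  have hjb : pot b (b, (⟨n - 1, by omega⟩ : Fin n)) = ((n : ℤ) - 1) := by
    simp [pot]; omega
  rw [hja, hjb, abs_sub_comm] at this
  have habs : ((n : ℤ) - 1) - (-(j.val : ℤ)) ≤ (comb n n).dist (a, j) (b, ⟨n - 1, by omega⟩) := by
    calc ((n : ℤ) - 1) - (-(j.val : ℤ)) ≤ |((n : ℤ) - 1) - (-(j.val : ℤ))| := le_abs_self _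
    _ ≤ _ := this
  omega

theorem burning_comb_balanced (n : ℕ) (hn : 1 ≤ n) :
    burningNumber (comb n n) = n := by
  have hmem : n ∈ {k | ∃ v : Fin k → (Fin n × Fin n),
      ∀ u, ∃ i : Fin k, (comb n n).dist (v i) u ≤ k - 1 - i.val} := by
    refine ⟨fun i => (if h : 2 * i.val < n then ⟨2 * i.val, h⟩
      else ⟨2 * (n - 1 - i.val) + 1, by omega⟩, i), ?_⟩
    rintro ⟨b, t⟩
    rcases Nat.even_or_odd b.val with ⟨c, hc⟩ | ⟨c, hc⟩
    · -- b even: own source covers whole tooth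
      refine ⟨⟨c, by omega⟩, ?_⟩
      have h2 : 2 * c < n := by omega
      simp only [h2, dif_pos]
      have hb : (⟨2 * c, h2⟩ : Fin n) = b := Fin.ext (by simp; omega)
      rw [hb]
      have := dist_same_tooth b (⟨c, by omega⟩ : Fin n) t
      have ht := t.isLt
      simp only at this ⊢
      omega
    · -- b odd
      by_cases hcase : t.val + 2 * c + 2 ≤ n
      · -- cross coverage from source c on adjacent even tooth
        refine ⟨⟨c, by omega⟩, ?_⟩
        have h2 : 2 * c < n := by omega
        simp only [h2, dif_pos]
        have := dist_cross (by omega : 0 < n) (⟨2 * c, h2⟩ : Fin n) b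
          (⟨c, by omega⟩ : Fin n) t
        simp only at this ⊢
        omega
      · -- own-tooth coverage from source n-1-c
        refine ⟨⟨n - 1 - c, by omega⟩, ?_⟩
        have h2 : ¬ 2 * (n - 1 - c) < n := by omega
        simp only [Fin.val_mk]; rw [dif_neg h2]
        have hb : (⟨2 * (n - 1 - (n - 1 - c)) + 1, by omega⟩ : Fin n) = b :=
          Fin.ext (by simp; omega)
        rw [hb]
        have := dist_same_tooth b (⟨n - 1 - c, by omega⟩ : Fin n) t
        have ht := t.isLt
        simp only at this ⊢
        omega
  refine le_antisymm (Nat.sInf_le hmem) (le_csInf ⟨n, hmem⟩ ?_)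
  rintro k ⟨v, hv⟩
  by_contra hlt
  push_neg at hlt
  -- each tip (b, n-1) must be covered by a source on tooth b
  have key : ∀ b : Fin n, ∃ i : Fin k, (v i).1 = b := by
    intro b
    obtain ⟨i, hi⟩ := hv (b, ⟨n - 1, by omega⟩)
    refine ⟨i, ?_⟩
    by_contra hne
    have hfar := tip_far hn (v i).1 b (v i).2 hne
    have hik := i.isLt
    rw [show ((v i).1, (v i).2) = v i from rfl] at hfar
    omega
  choose F hF using key
  have hinj : Function.Injective F := by
    intro b b' h
    rw [← hF b, ← hF b', h]
  have := Fintype.card_le_of_injective F hinj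
  simp at this
  omega
end

section
/- For all real numbers n ≥ m ≥ 1, the inequality m − 1 + √(n − m + 1) ≤ √(nm) holds. -/
theorem spine_dominant_ineq (n m : ℝ) (hm : 1 ≤ m) (hmn : m ≤ n) :
    m - 1 + Real.sqrt (n - m + 1) ≤ Real.sqrt (n * m) := by
  have h1 : (0:ℝ) ≤ n - m + 1 := by linarith
  set s := Real.sqrt (n - m + 1) with hsdef
  have hs : s ^ 2 = n - m + 1 := Real.sq_sqrt h1
  have hs0 : 0 ≤ s := Real.sqrt_nonneg _
  have hL : 0 ≤ m - 1 + s := by linarith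
  rw [show Real.sqrt (n * m) = Real.sqrt (n*m) from rfl]
  have : (m - 1 + s) ^ 2 ≤ n * m := by nlinarith [sq_nonneg (s - 1), hm]
  calc m - 1 + s = Real.sqrt ((m - 1 + s)^2) := (Real.sqrt_sq hL).symm
    _ ≤ Real.sqrt (n * m) := Real.sqrt_le_sqrt this
end

section
/- For all positive integers n, m, T with n ≤ m, n ≥ 3, m ≥ n + 3, and T = ⌈√(nm)⌉, writing r = (T−1) mod n, the inequality T² + (n−2)T + 1 + r(n−r) − n(n−1) ≥ nm holds. -/
theorem tooth_dominant_ineq (n m : ℕ) (hn : 3 ≤ n) (hm : n + 3 ≤ m) :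
    ((⌈Real.sqrt ((n * m : ℕ))⌉₊ : ℤ) ^ 2
        + ((n : ℤ) - 2) * (⌈Real.sqrt ((n * m : ℕ))⌉₊ : ℤ) + 1
        + (((⌈Real.sqrt ((n * m : ℕ))⌉₊ - 1) % n : ℕ) : ℤ)
            * ((n : ℤ) - (((⌈Real.sqrt ((n * m : ℕ))⌉₊ - 1) % n : ℕ) : ℤ))
        - (n : ℤ) * ((n : ℤ) - 1)) ≥ (n : ℤ) * m := by
  set T : ℕ := ⌈Real.sqrt ((n * m : ℕ))⌉₊ with hT
  set r : ℕ := (T - 1) % n with hr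
  -- T² ≥ n*m
  have hsq : (n * m : ℕ) ≤ T ^ 2 := by
    have h1 : Real.sqrt ((n * m : ℕ)) ≤ (T : ℝ) := Nat.le_ceil _
    have h2 : ((n * m : ℕ) : ℝ) ≤ (T : ℝ) ^ 2 := by
      have := Real.sq_sqrt (by positivity : ((n * m : ℕ) : ℝ) ≥ 0)
      nlinarith [Real.sqrt_nonneg ((n * m : ℕ) : ℝ)]
    exact_mod_cast h2
  -- T ≥ n + 2
  have hTn : n + 2 ≤ T := by
    have hlt : ((n + 1 : ℕ) : ℝ) < Real.sqrt ((n * m : ℕ)) := by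
      rw [show ((n + 1 : ℕ) : ℝ) = Real.sqrt (((n + 1 : ℕ) : ℝ) ^ 2) by
        rw [Real.sqrt_sq (by positivity)]]
      apply Real.sqrt_lt_sqrt (by positivity)
      have : (n + 1) ^ 2 < n * m := by nlinarith
      exact_mod_cast this
    have := Nat.lt_ceil.mpr hlt
    omega
  have hrn : r < n := Nat.mod_lt _ (by omega)
  have hsq' : (n : ℤ) * m ≤ (T : ℤ) ^ 2 := by exact_mod_cast hsq
  have hTn' : (n : ℤ) + 2 ≤ (T : ℤ) := by exact_mod_cast hTn
  have hrn' : (r : ℤ) < n := by exact_mod_cast hrn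
  have hr0 : (0 : ℤ) ≤ r := Int.ofNat_nonneg r
  nlinarith [mul_nonneg hr0 (by linarith : (0:ℤ) ≤ (n:ℤ) - r)]
end
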